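/- arXiv:2307.04446 — 9 statements merged into one kernel-verified Lean document; each statement's English description precedes it below -/
import Mathlib

section
/- Let T be a tournament and let P = (v_0, v_1, ..., v_k) be a shortest directed path in T from v_0 to v_k with k ≥ 3, with arcs e_i = v_{i-1}v_i. Then every vertex of P belongs to N(e_i) for some i with 1 ≤ i ≤ k. -/
variable {V : Type*}

/-- A tournament: an asymmetric, total relation. -/
def IsTournament (A : V → V → Prop) : Prop :=
  (∀ u v, A u v → ¬ A v u) ∧ (∀ u v, u ≠ v → A u v ∨ A v u)

/-- For an arc `e = uv`, `N(e) = N⁺(v) ∩ N⁻(u)`: vertices `w` with `v → w → u`. -/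
def ArcNbhd (A : V → V → Prop) (u v : V) : Set V := {w | A v w ∧ A w u}

/-- `S` induces an acyclic subdigraph. -/
def AcyclicOn (A : V → V → Prop) (S : Set V) : Prop :=
  ∀ v, ¬ Relation.TransGen (fun x y => x ∈ S ∧ y ∈ S ∧ A x y) v v

/-- The (di)chromatic number of the subdigraph induced on `S` is at most `k`:
`S` is covered by `k` sets, each inducing an acyclic subdigraph. -/
def ChromLE (A : V → V → Prop) (S : Set V) (k : ℕ) : Prop :=
  ∃ C : Fin k → Set V, (∀ v ∈ S, ∃ i, v ∈ C i) ∧ ∀ i, AcyclicOn A (C i ∩ S)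

/-- The (di)chromatic number of the subdigraph induced on `S` is at least `k`. -/
def ChromGE (A : V → V → Prop) (S : Set V) (k : ℕ) : Prop :=
  ∀ m, ChromLE A S m → k ≤ m

/-- Every arc neighborhood has chromatic number at most `t`. -/
def ArcBounded (A : V → V → Prop) (t : ℕ) : Prop :=
  ∀ u v, A u v → ChromLE A (ArcNbhd A u v) t

/-- `P 0, P 1, …, P k` is a directed walk/path. -/
def IsPathOn (A : V → V → Prop) (P : ℕ → V) (k : ℕ) : Prop :=
  ∀ i < k, A (P i) (P (i + 1))

/-- `P 0, …, P k` is a shortest directed path from `P 0` to `P k`. -/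
def IsShortestPath (A : V → V → Prop) (P : ℕ → V) (k : ℕ) : Prop :=
  IsPathOn A P k ∧
    ∀ (m : ℕ) (Q : ℕ → V), Q 0 = P 0 → Q m = P k → IsPathOn A Q m → k ≤ m

def StronglyConnected (A : V → V → Prop) : Prop :=
  ∀ u v : V, Relation.ReflTransGen A u v

def StronglyConnectedOn (A : V → V → Prop) (S : Set V) : Prop :=
  ∀ u ∈ S, ∀ v ∈ S, Relation.ReflTransGen (fun x y => x ∈ S ∧ y ∈ S ∧ A x y) u v

lemma backward_arc (A : V → V → Prop) (hT : IsTournament A) (P : ℕ → V) (k : ℕ)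
    (hP : IsShortestPath A P k) {i j : ℕ} (hij : i + 2 ≤ j) (hjk : j ≤ k) :
    A (P j) (P i) := by
  obtain ⟨hpath, hmin⟩ := hP
  have hne : P i ≠ P j := by
    intro heq
    set s := j - i with hs
    refine absurd (hmin (k - s) (fun m => if m ≤ i then P m else P (m + s)) ?_ ?_ ?_)
      (by omega)
    · simp
    · by_cases h : k - s ≤ i
      · have h1 : k - s = i := by omega
        have h2 : j = k := by omega
        simp only [if_pos h, h1, heq, h2]
        rw [if_pos le_rfl]
      · simp only [if_neg h]
        congr 1
        omega
    · intro m hm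
      by_cases h1 : m + 1 ≤ i
      · simp only [if_pos h1, if_pos (by omega : m ≤ i)]
        exact hpath m (by omega)
      · by_cases h2 : m ≤ i
        · have hmi : m = i := by omega
          simp only [if_pos h2, if_neg h1]
          have he : m + 1 + s = j + 1 := by omega
          rw [he, hmi, heq]
          exact hpath j (by omega)
        · simp only [if_neg h2, if_neg h1]
          have he : m + 1 + s = m + s + 1 := by omega
          rw [he]
          exact hpath (m + s) (by omega)
  have hfor : ¬ A (P i) (P j) := by
    intro hA
    set s := j - i - 1 with hs
    refine absurd (hmin (k - s) (fun m => if m ≤ i then P m else P (m + s)) ?_ ?_ ?_)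
      (by omega)
    · simp
    · have h : ¬ (k - s ≤ i) := by omega
      simp only [if_neg h]
      congr 1
      omega
    · intro m hm
      by_cases h1 : m + 1 ≤ i
      · simp only [if_pos h1, if_pos (by omega : m ≤ i)]
        exact hpath m (by omega)
      · by_cases h2 : m ≤ i
        · have hmi : m = i := by omega
          simp only [if_pos h2, if_neg h1]
          have he : m + 1 + s = j := by omega
          rw [he, hmi]
          exact hA
        · simp only [if_neg h2, if_neg h1]
          have he : m + 1 + s = m + s + 1 := by omega
          rw [he]
          exact hpath (m + s) (by omega)
  rcases hT.2 (P j) (P i) (fun h => hne h.symm) with h | h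
  · exact h
  · exact absurd h hfor

theorem stmt1 (A : V → V → Prop) (hT : IsTournament A) (P : ℕ → V) (k : ℕ)
    (hP : IsShortestPath A P k) (hk : 3 ≤ k) :
    ∀ j ≤ k, ∃ i < k, P j ∈ ArcNbhd A (P i) (P (i + 1)) := by
  intro j hj
  have hpath := hP.1
  rcases Nat.lt_or_ge j 1 with h0 | h1
  · -- j = 0
    have hj0 : j = 0 := by omega
    subst hj0
    exact ⟨1, by omega, backward_arc A hT P k hP (by omega) (by omega), hpath 0 (by omega)⟩
  · rcases Nat.lt_or_ge j (k - 1) with h2 | h3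
    · -- 1 ≤ j ≤ k - 2, take i = j + 1
      refine ⟨j + 1, by omega, ?_, hpath j (by omega)⟩
      exact backward_arc A hT P k hP (by omega) (by omega)
    · rcases Nat.lt_or_ge j k with h4 | h5
      · -- j = k - 1, take i = k - 3
        have hj1 : j = k - 1 := by omega
        subst hj1
        refine ⟨k - 3, by omega, ?_, ?_⟩
        · rw [show k - 3 + 1 = k - 2 by omega, show k - 1 = k - 2 + 1 by omega]
          exact hpath (k - 2) (by omega)
        · exact backward_arc A hT P k hP (by omega) (by omega)
      · -- j = k, take i = k - 2
        have hjk : j = k := by omega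
        rw [hjk]
        refine ⟨k - 2, by omega, ?_, ?_⟩
        · rw [show k - 2 + 1 = k - 1 by omega, show k = k - 1 + 1 by omega]
          exact hpath (k - 1) (by omega)
        · exact backward_arc A hT P k hP (by omega) (by omega)
end

section
/- Let T be a tournament and let P = (v_0, v_1, ..., v_k) be a shortest directed path from v_0 to v_k. If i < j and some arc of T goes from a vertex of N(e_i) to a vertex of N(e_j), where e_i = v_{i-1}v_i, then j - i ≤ 4 (i.e., there is no arc from N(e_i) to N(e_j) when j ≥ i + 5). -/
variable {V : Type*}

theorem stmt2 (A : V → V → Prop) (hT : IsTournament A) (P : ℕ → V) (k : ℕ)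
    (hP : IsShortestPath A P k) (i j : ℕ) (hij : i < j) (hjk : j < k)
    (x y : V) (hx : x ∈ ArcNbhd A (P i) (P (i + 1)))
    (hy : y ∈ ArcNbhd A (P j) (P (j + 1))) (hxy : A x y) :
    j - i ≤ 4 := by
  obtain ⟨hpath, hmin⟩ := hP
  obtain ⟨hx1, hx2⟩ := hx
  obtain ⟨hy1, hy2⟩ := hy
  set m := i + 4 + (k - j) with hm
  set Q : ℕ → V := fun n =>
    if n ≤ i + 1 then P n else if n = i + 2 then x else if n = i + 3 then y
    else P (n + j - (i + 4)) with hQ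
  have h0 : Q 0 = P 0 := by simp [hQ]
  have hmk : Q m = P k := by
    have c1 : ¬ m ≤ i + 1 := by omega
    have c2 : ¬ m = i + 2 := by omega
    have c3 : ¬ m = i + 3 := by omega
    simp only [hQ, c1, c2, c3, if_false]
    congr 1
    omega
  have hpathQ : IsPathOn A Q m := by
    intro n hn
    simp only [hQ]
    split_ifs <;>
      first
      | omega
      | exact hpath n (by omega)
      | (have e : n = i + 1 := by omega
         rw [e]; exact hx1)
      | exact hxy
      | (have e : n + 1 + j - (i + 4) = j := by omega
         rw [e]; exact hy2)
      | (have e : n + 1 + j - (i + 4) = (n + j - (i + 4)) + 1 := by omega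
         rw [e]; exact hpath _ (by omega))
  have := hmin m Q h0 hmk hpathQ
  omega
end

section
/- Let T be a strongly connected tournament in which for every arc e the subtournament on N(e) has chromatic number at most t (T is t-arc-bounded). Let P = (v_0,...,v_k) be a shortest path from v_0 to v_k and let S = (N^-(v_0) ∩ N^+(v_k)) ∪ V(P). Then the subtournament T[S] has chromatic number at most 5t if k ≥ 3, at most 2t+1 if k = 2, and at most t+2 if k = 1. In particular χ⃗(T[S]) ≤ 5t whenever t ≥ 2. -/
variable {V : Type*}

section Aux

lemma acyclicOn_mono {A : V → V → Prop} {S T : Set V} (h : S ⊆ T) (hT : AcyclicOn A T) :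
    AcyclicOn A S := by
  intro v hv
  exact hT v (Relation.TransGen.mono (fun x y ⟨hx, hy, ha⟩ => ⟨h hx, h hy, ha⟩) v v hv)

lemma acyclicOn_of_no_arc {A : V → V → Prop} {S : Set V}
    (h : ∀ x ∈ S, ∀ y ∈ S, ¬ A x y) : AcyclicOn A S := by
  intro v hv
  cases hv with
  | single hs => exact h _ hs.1 _ hs.2.1 hs.2.2
  | tail _ hs => exact h _ hs.1 _ hs.2.1 hs.2.2

lemma transGen_rank_aux {R : V → V → Prop} {ρ : V → ℕ}
    (h1 : ∀ x y, R x y → ρ y ≤ ρ x) {x y : V} (h : Relation.TransGen R x y) :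
    ρ y ≤ ρ x ∧ (ρ x ≤ ρ y →
      Relation.TransGen (fun a b => R a b ∧ ρ a = ρ x ∧ ρ b = ρ x) x y) := by
  induction h with
  | single hs => exact ⟨h1 _ _ hs, fun hle => .single ⟨hs, rfl, le_antisymm (h1 _ _ hs) hle |>.symm ▸ rfl⟩⟩
  | tail hxy hs ih =>
    rename_i b c
    refine ⟨le_trans (h1 _ _ hs) ih.1, fun hle => ?_⟩
    have hbx : ρ b = ρ x := le_antisymm ih.1 (le_trans hle (h1 _ _ hs))
    have hcx : ρ c = ρ x := le_antisymm (le_trans (h1 _ _ hs) ih.1) hle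
    exact (ih.2 (hbx ▸ le_refl _)).tail ⟨hs, hbx, hcx⟩

lemma rank_lemma {R : V → V → Prop} {ρ : V → ℕ}
    (h1 : ∀ x y, R x y → ρ y ≤ ρ x)
    (h2 : ∀ v, ¬ Relation.TransGen (fun x y => R x y ∧ ρ x = ρ v ∧ ρ y = ρ v) v v) :
    ∀ v, ¬ Relation.TransGen R v v := by
  intro v hv
  exact h2 v ((transGen_rank_aux h1 hv).2 le_rfl)

lemma acyclicOn_insert_sink {A : V → V → Prop} {T : Set V} {a : V}
    (hT : AcyclicOn A T) (ha : ∀ x ∈ insert a T, ¬ A a x) : AcyclicOn A (insert a T) := by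
  classical
  apply rank_lemma (ρ := fun x => if x = a then 0 else 1)
  · rintro x y ⟨hx, hy, hxy⟩
    by_cases hxa : x = a
    · exact absurd hxy (hxa ▸ ha y hy)
    · rw [if_neg hxa]
      split <;> omega
  · intro u hu
    by_cases hu0 : u = a
    · have hstep : ∀ x y, ((x ∈ insert a T ∧ y ∈ insert a T ∧ A x y) ∧
          (if x = a then 0 else 1) = (if u = a then (0:ℕ) else 1) ∧
          (if y = a then 0 else 1) = (if u = a then (0:ℕ) else 1)) → False := by
        rintro x y ⟨⟨hx, hy, hxy⟩, hρx, _⟩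
        rw [if_pos hu0] at hρx
        by_cases hxa : x = a
        · exact ha y hy (hxa ▸ hxy)
        · rw [if_neg hxa] at hρx; omega
      cases hu with
      | single h => exact hstep _ _ h
      | tail _ h => exact hstep _ _ h
    · refine hT u (Relation.TransGen.mono ?_ u u hu)
      rintro x y ⟨⟨hx, hy, hxy⟩, hρx, hρy⟩
      rw [if_neg hu0] at hρx hρy
      have hxa : x ≠ a := by intro h; rw [if_pos h] at hρx; omega
      have hya : y ≠ a := by intro h; rw [if_pos h] at hρy; omega
      exact ⟨(Set.mem_insert_iff.mp hx).resolve_left hxa,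
        (Set.mem_insert_iff.mp hy).resolve_left hya, hxy⟩

lemma acyclicOn_insert_source {A : V → V → Prop} {T : Set V} {a : V}
    (hT : AcyclicOn A T) (ha : ∀ x ∈ insert a T, ¬ A x a) : AcyclicOn A (insert a T) := by
  classical
  apply rank_lemma (ρ := fun x => if x = a then 1 else 0)
  · rintro x y ⟨hx, hy, hxy⟩
    by_cases hya : y = a
    · exact absurd hxy (hya ▸ ha x hx)
    · rw [if_neg hya]
      omega
  · intro u hu
    by_cases hu0 : u = a
    · have hstep : ∀ x y, ((x ∈ insert a T ∧ y ∈ insert a T ∧ A x y) ∧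
          (if x = a then 1 else 0) = (if u = a then (1:ℕ) else 0) ∧
          (if y = a then 1 else 0) = (if u = a then (1:ℕ) else 0)) → False := by
        rintro x y ⟨⟨hx, hy, hxy⟩, _, hρy⟩
        rw [if_pos hu0] at hρy
        by_cases hya : y = a
        · exact ha x hx (hya ▸ hxy)
        · rw [if_neg hya] at hρy; omega
      cases hu with
      | single h => exact hstep _ _ h
      | tail _ h => exact hstep _ _ h
    · refine hT u (Relation.TransGen.mono ?_ u u hu)
      rintro x y ⟨⟨hx, hy, hxy⟩, hρx, hρy⟩
      rw [if_neg hu0] at hρx hρy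
      have hxa : x ≠ a := by intro h; rw [if_pos h] at hρx; omega
      have hya : y ≠ a := by intro h; rw [if_pos h] at hρy; omega
      exact ⟨(Set.mem_insert_iff.mp hx).resolve_left hxa,
        (Set.mem_insert_iff.mp hy).resolve_left hya, hxy⟩

/-- Vertices on a shortest path are distinct. -/
lemma path_dup {A : V → V → Prop} {P : ℕ → V} {k : ℕ} (hP : IsShortestPath A P k)
    {m m' : ℕ} (h : m < m') (h' : m' ≤ k) (he : P m = P m') : False := by
  set Q : ℕ → V := fun l => if l ≤ m then P l else P (l + (m' - m)) with hQ
  have hQa : ∀ l, l ≤ m → Q l = P l := by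
    intro l hl; simp only [hQ]; rw [if_pos hl]
  have hQb : ∀ l, m < l → Q l = P (l + (m' - m)) := by
    intro l hl; simp only [hQ]; rw [if_neg (by omega)]
  have h0 : Q 0 = P 0 := hQa 0 (by omega)
  have hm : Q (k - (m' - m)) = P k := by
    rcases Nat.lt_or_ge (k - (m' - m)) (m + 1) with hc | hc
    · have e1 : k - (m' - m) = m := by omega
      have e2 : m' = k := by omega
      rw [hQa _ (by omega), e1, he, e2]
    · rw [hQb _ (by omega)]; congr 1; omega
  have hpath : IsPathOn A Q (k - (m' - m)) := by
    intro l hl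
    rcases Nat.lt_or_ge (l + 1) (m + 1) with hc | hc
    · rw [hQa _ (by omega), hQa _ (by omega)]; exact hP.1 l (by omega)
    · rcases Nat.lt_or_ge l (m + 1) with hd | hd
      · have hlm : l = m := by omega
        rw [hQa _ (by omega), hQb _ (by omega), hlm]
        have : m + 1 + (m' - m) = m' + 1 := by omega
        rw [this, he]
        exact hP.1 m' (by omega)
      · rw [hQb _ (by omega), hQb _ (by omega)]
        have : l + 1 + (m' - m) = (l + (m' - m)) + 1 := by omega
        rw [this]
        exact hP.1 _ (by omega)
  have := hP.2 _ Q h0 hm hpath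
  omega

/-- Splice lemma: if `P i → w 0 → w 1 → ⋯ → w c → P j` then `j ≤ i + c + 2`. -/
lemma path_cut {A : V → V → Prop} {P : ℕ → V} {k : ℕ} (hP : IsShortestPath A P k)
    (c : ℕ) (w : ℕ → V) {i j : ℕ} (hi : i ≤ k) (hj : j ≤ k)
    (h0 : A (P i) (w 0)) (hc : ∀ l < c, A (w l) (w (l + 1))) (h1 : A (w c) (P j)) :
    j ≤ i + c + 2 := by
  set Q : ℕ → V := fun l => if l ≤ i then P l else if l ≤ i + 1 + c then w (l - (i + 1))
    else P (l + j - (i + c + 2)) with hQ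
  have hQa : ∀ l, l ≤ i → Q l = P l := by
    intro l hl; simp only [hQ]; rw [if_pos hl]
  have hQb : ∀ l, i < l → l ≤ i + 1 + c → Q l = w (l - (i + 1)) := by
    intro l hl hl'; simp only [hQ]; rw [if_neg (by omega), if_pos hl']
  have hQc : ∀ l, i + 1 + c < l → Q l = P (l + j - (i + c + 2)) := by
    intro l hl; simp only [hQ]; rw [if_neg (by omega), if_neg (by omega)]
  have hq0 : Q 0 = P 0 := hQa 0 (by omega)
  have hqm : Q (i + c + 2 + (k - j)) = P k := by
    rw [hQc _ (by omega)]; congr 1; omega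
  have hpath : IsPathOn A Q (i + c + 2 + (k - j)) := by
    intro l hl
    rcases Nat.lt_or_ge (l + 1) (i + 1) with ha | ha
    · rw [hQa _ (by omega), hQa _ (by omega)]; exact hP.1 l (by omega)
    · rcases Nat.lt_or_ge l (i + 1) with hb | hb
      · have : l = i := by omega
        subst this
        rw [hQa _ (by omega), hQb _ (by omega) (by omega)]
        have : l + 1 - (l + 1) = 0 := by omega
        rw [this]; exact h0
      · rcases Nat.lt_or_ge (l + 1) (i + 1 + c + 1) with hd | hd
        · rw [hQb _ (by omega) (by omega), hQb _ (by omega) (by omega)]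
          have e1 : l + 1 - (i + 1) = (l - (i + 1)) + 1 := by omega
          rw [e1]
          exact hc _ (by omega)
        · rcases Nat.lt_or_ge l (i + 1 + c + 1) with he | he
          · have hli : l = i + 1 + c := by omega
            rw [hQb _ (by omega) (by omega), hQc _ (by omega), hli]
            have e1 : i + 1 + c - (i + 1) = c := by omega
            have e2 : i + 1 + c + 1 + j - (i + c + 2) = j := by omega
            rw [e1, e2]
            exact h1
          · rw [hQc _ (by omega), hQc _ (by omega)]
            have e1 : l + 1 + j - (i + c + 2) = (l + j - (i + c + 2)) + 1 := by omega
            rw [e1]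
            exact hP.1 _ (by omega)
  have := hP.2 _ Q hq0 hqm hpath
  omega

/-- No shortcuts along the path itself. -/
lemma path_cut0 {A : V → V → Prop} {P : ℕ → V} {k : ℕ} (hP : IsShortestPath A P k)
    {i j : ℕ} (hij : i < j) (hj : j ≤ k) (h : A (P i) (P j)) : j ≤ i + 1 := by
  set Q : ℕ → V := fun l => if l ≤ i then P l else P (l + j - (i + 1)) with hQ
  have hQa : ∀ l, l ≤ i → Q l = P l := by
    intro l hl; simp only [hQ]; rw [if_pos hl]
  have hQb : ∀ l, i < l → Q l = P (l + j - (i + 1)) := by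
    intro l hl; simp only [hQ]; rw [if_neg (by omega)]
  have hq0 : Q 0 = P 0 := hQa 0 (by omega)
  have hqm : Q (i + 1 + (k - j)) = P k := by
    rw [hQb _ (by omega)]; congr 1; omega
  have hpath : IsPathOn A Q (i + 1 + (k - j)) := by
    intro l hl
    rcases Nat.lt_or_ge (l + 1) (i + 1) with ha | ha
    · rw [hQa _ (by omega), hQa _ (by omega)]; exact hP.1 l (by omega)
    · rcases Nat.lt_or_ge l (i + 1) with hb | hb
      · have : l = i := by omega
        subst this
        rw [hQa _ (by omega), hQb _ (by omega)]
        have : l + 1 + j - (l + 1) = j := by omega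
        rw [this]
        exact h
      · rw [hQb _ (by omega), hQb _ (by omega)]
        have e1 : l + 1 + j - (i + 1) = (l + j - (i + 1)) + 1 := by omega
        rw [e1]
        exact hP.1 _ (by omega)
  have := hP.2 _ Q hq0 hqm hpath
  omega

/-- If `k ≥ 2` then `t ≥ 1` for a `t`-arc-bounded tournament with a shortest path of length `k`. -/
lemma tpos {A : V → V → Prop} (hT : IsTournament A) {t : ℕ} (hb : ArcBounded A t)
    {P : ℕ → V} {k : ℕ} (hP : IsShortestPath A P k) (hk : 2 ≤ k) : 1 ≤ t := by
  obtain ⟨hasym, htot⟩ := hT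
  by_contra h
  have hne : P 0 ≠ P 2 := fun he => path_dup hP (by omega) (by omega) he
  have h20 : A (P 2) (P 0) := by
    rcases htot (P 0) (P 2) hne with h' | h'
    · exact absurd (path_cut0 hP (by omega) (by omega) h') (by omega)
    · exact h'
  obtain ⟨C, hC1, _⟩ := hb _ _ h20
  obtain ⟨i, _⟩ := hC1 (P 1) ⟨hP.1 0 (by omega), hP.1 1 (by omega)⟩
  have := i.isLt
  omega

/-- The main `5t` construction, valid for every `k` as soon as `t ≥ 1`. -/
lemma main5t {A : V → V → Prop} (hT : IsTournament A) {t : ℕ} (ht : 1 ≤ t)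
    (hb : ArcBounded A t) {P : ℕ → V} {k : ℕ} (hP : IsShortestPath A P k) :
    ChromLE A ({w | A w (P 0) ∧ A (P k) w} ∪ {w | ∃ i ≤ k, w = P i}) (5 * t) := by
  classical
  obtain ⟨hasym, htot⟩ := hT
  have hirr : ∀ x, ¬ A x x := fun x h => hasym x x h h
  set B : Set V := {w | A w (P 0) ∧ A (P k) w} with hB
  set Ps : Set V := {w | ∃ i ≤ k, w = P i} with hPs
  -- choose colorings of arc neighborhoods
  have hcolex : ∀ i : ℕ, ∃ C : ℕ → Set V, 1 ≤ i → i ≤ k →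
      ((∀ v ∈ ArcNbhd A (P (i-1)) (P i), ∃ s < t, v ∈ C s) ∧
        ∀ s, AcyclicOn A (C s ∩ ArcNbhd A (P (i-1)) (P i))) := by
    intro i
    by_cases h : 1 ≤ i ∧ i ≤ k
    · have harc : A (P (i-1)) (P i) := by
        have h' := hP.1 (i-1) (by omega)
        have e : i - 1 + 1 = i := by omega
        rwa [e] at h'
      obtain ⟨C, hC1, hC2⟩ := hb _ _ harc
      refine ⟨fun s => if hs : s < t then C ⟨s, hs⟩ else ∅, fun _ _ => ⟨?_, ?_⟩⟩
      · intro v hv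
        obtain ⟨s, hs⟩ := hC1 v hv
        exact ⟨s.val, s.isLt, by simp [s.isLt, hs]⟩
      · intro s
        by_cases hs : s < t
        · simpa [hs] using hC2 ⟨s, hs⟩
        · simp only [dif_neg hs]
          exact acyclicOn_of_no_arc (fun x hx => absurd hx.1 (Set.notMem_empty x))
    · exact ⟨fun _ => ∅, fun h1 h2 => absurd ⟨h1, h2⟩ h⟩
  choose col hcol using hcolex
  set f : V → ℕ := fun x => sInf {m | A (P m) x} with hf
  set pd : V → ℕ := fun x => sInf {m | P m = x} with hpdd
  set ρ : V → ℕ := fun x => if x ∈ Ps then 2 * pd x + 1 else 2 * f x with hρ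
  -- facts about `f` on `B \ Ps`
  have hBfacts : ∀ x, x ∈ B → x ∉ Ps →
      (1 ≤ f x ∧ f x ≤ k ∧ A (P (f x)) x ∧ (∀ m, m < f x → ¬ A (P m) x) ∧
       (∀ m, m < f x → A x (P m)) ∧ (∀ m, m ≤ k → f x + 3 ≤ m → A (P m) x)) := by
    intro x hxB hxP
    have hne : ({m | A (P m) x} : Set ℕ).Nonempty := ⟨k, hxB.2⟩
    have hmem : A (P (f x)) x := Nat.sInf_mem hne
    have hle : f x ≤ k := Nat.sInf_le hxB.2
    have hmin : ∀ m, m < f x → ¬ A (P m) x := fun m hm => Nat.notMem_of_lt_sInf hm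
    have h1 : 1 ≤ f x := by
      by_contra h0
      have e : f x = 0 := by omega
      rw [e] at hmem
      exact hasym _ _ hmem hxB.1
    have hback : ∀ m, m < f x → A x (P m) := by
      intro m hm
      have hxne : x ≠ P m := fun he => hxP ⟨m, by omega, he⟩
      rcases htot x (P m) hxne with h | h
      · exact h
      · exact absurd h (hmin m hm)
    have hfar : ∀ m, m ≤ k → f x + 3 ≤ m → A (P m) x := by
      intro m hmk hm
      have hxne : P m ≠ x := fun he => hxP ⟨m, hmk, he.symm⟩
      rcases htot (P m) x hxne with h | h
      · exact h
      · exfalso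
        have := path_cut hP 0 (fun _ => x) hle hmk hmem
          (fun l hl => absurd hl (by omega)) h
        omega
    exact ⟨h1, hle, hmem, hmin, hback, hfar⟩
  have hpdP : ∀ m, m ≤ k → pd (P m) = m := by
    intro m hm
    have hne : ({m' | P m' = P m} : Set ℕ).Nonempty := ⟨m, rfl⟩
    have hmem : P (pd (P m)) = P m := Nat.sInf_mem hne
    have hle : pd (P m) ≤ m := Nat.sInf_le rfl
    rcases Nat.lt_or_ge (pd (P m)) m with h | h
    · exact absurd hmem (fun he => path_dup hP h hm he)
    · omega
  set D : ℕ → ℕ → Set V := fun r s =>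
    {x | x ∈ B ∧ x ∉ Ps ∧ f x % 5 = r ∧ x ∈ col (f x) s} ∪
    {x | s = 0 ∧ ∃ m ≤ k, x = P m ∧ m % 5 = r} with hD
  -- membership and rank characterization
  have hrank : ∀ r s x, x ∈ D r s →
      (∃ m ≤ k, x = P m ∧ m % 5 = r ∧ ρ x = 2 * m + 1) ∨
      (x ∈ B ∧ x ∉ Ps ∧ f x % 5 = r ∧ x ∈ col (f x) s ∧ ρ x = 2 * f x) := by
    intro r s x hx
    rcases hx with ⟨hB', hP', hr, hcolx⟩ | ⟨hs0, m, hm, he, hr⟩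
    · right
      refine ⟨hB', hP', hr, hcolx, ?_⟩
      simp only [hρ]
      rw [if_neg hP']
    · left
      refine ⟨m, hm, he, hr, ?_⟩
      have hxPs : x ∈ Ps := ⟨m, hm, he⟩
      simp only [hρ]
      rw [if_pos hxPs, he, hpdP m hm]
  refine ⟨fun n => D (n.val / t) (n.val % t), ?_, ?_⟩
  · -- covering
    intro x hx
    by_cases hxPs : x ∈ Ps
    · obtain ⟨m, hm, he⟩ := hxPs
      have h5 : m % 5 < 5 := Nat.mod_lt _ (by norm_num)
      refine ⟨⟨(m % 5) * t, by nlinarith⟩, Or.inr ⟨?_, m, hm, he, ?_⟩⟩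
      · simp [Nat.mul_mod_left]
      · rw [Nat.mul_div_cancel _ (by omega : 0 < t)]
    · have hxB : x ∈ B := by
        rcases hx with h | h
        · exact h
        · exact absurd h hxPs
      obtain ⟨h1, hle, hmem, hmin, hback, hfar⟩ := hBfacts x hxB hxPs
      have hNx : x ∈ ArcNbhd A (P (f x - 1)) (P (f x)) := ⟨hmem, hback _ (by omega)⟩
      obtain ⟨s, hst, hxs⟩ := (hcol (f x) h1 hle).1 x hNx
      have h5 : f x % 5 < 5 := Nat.mod_lt _ (by norm_num)
      refine ⟨⟨s + (f x % 5) * t, by nlinarith⟩, Or.inl ⟨hxB, hxPs, ?_, ?_⟩⟩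
      · rw [Nat.add_mul_div_right _ _ (by omega : 0 < t), Nat.div_eq_of_lt hst]
        omega
      · rw [Nat.add_mul_mod_self_right, Nat.mod_eq_of_lt hst]
        exact hxs
  · -- acyclicity
    intro n
    apply acyclicOn_mono Set.inter_subset_left
    set r := n.val / t with hr
    set s := n.val % t with hs
    apply rank_lemma (ρ := ρ)
    · -- rank monotone
      rintro x y ⟨hx, hy, hxy⟩
      rcases hrank r s x hx with ⟨mx, hmx, hex, hrx, hρx⟩ | ⟨hxB, hxPs, hrx, hcolx, hρx⟩
      · rcases hrank r s y hy with ⟨my, hmy, hey, hry, hρy⟩ | ⟨hyB, hyPs, hry, hcoly, hρy⟩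
        · -- path-path
          rw [hρx, hρy]
          by_contra hcon
          have hlt : mx < my := by omega
          have harc : A (P mx) (P my) := by rw [← hex, ← hey]; exact hxy
          have := path_cut0 hP hlt hmy harc
          omega
        · -- path-B
          rw [hρx, hρy]
          obtain ⟨h1y, hley, hmemy, hminy, hbacky, hfary⟩ := hBfacts y hyB hyPs
          by_contra hcon
          exact hminy mx (by omega) (by rw [← hex]; exact hxy)
      · obtain ⟨h1x, hlex, hmemx, hminx, hbackx, hfarx⟩ := hBfacts x hxB hxPs
        rcases hrank r s y hy with ⟨my, hmy, hey, hry, hρy⟩ | ⟨hyB, hyPs, hry, hcoly, hρy⟩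
        · -- B-path
          rw [hρx, hρy]
          by_contra hcon
          have hge : f x ≤ my := by omega
          rcases Nat.eq_or_lt_of_le hge with heq | hlt
          · refine hasym _ _ hmemx ?_
            rw [hey, ← heq] at hxy
            exact hxy
          · have := path_cut hP 0 (fun _ => x) hlex hmy hmemx
              (fun l hl => absurd hl (by omega)) (by rw [← hey]; exact hxy)
            omega
        · -- B-B
          rw [hρx, hρy]
          obtain ⟨h1y, hley, hmemy, hminy, hbacky, hfary⟩ := hBfacts y hyB hyPs
          by_contra hcon
          have hlt : f x < f y := by omega
          have hchain : ∀ l < 1, A ((fun l => if l = 0 then x else y) l)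
              ((fun l => if l = 0 then x else y) (l + 1)) := by
            intro l hl
            have hl0 : l = 0 := by omega
            subst hl0
            simpa using hxy
          have := path_cut hP 1 (fun l => if l = 0 then x else y) hlex
            (show f y - 1 ≤ k by omega) (by simpa using hmemx) hchain
            (by simpa using hbacky (f y - 1) (by omega))
          omega
    · -- same-rank cycles
      intro v hv
      have hvD : v ∈ D r s := by
        cases hv with
        | single h => exact h.1.1
        | tail _ h => exact h.1.2.1
      rcases hrank r s v hvD with ⟨mv, hmv, hev, hrv, hρv⟩ | ⟨hvB, hvPs, hrv, hcolv, hρv⟩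
      · -- v on the path: no same-rank step possible
        have hstep : ∀ x y, ((x ∈ D r s ∧ y ∈ D r s ∧ A x y) ∧ ρ x = ρ v ∧ ρ y = ρ v) → False := by
          rintro x y ⟨⟨hx, hy, hxy⟩, hρx, hρy⟩
          rcases hrank r s x hx with ⟨mx, hmx, hex, hrx, hρx'⟩ | ⟨_, _, _, _, hρx'⟩
          · rcases hrank r s y hy with ⟨my, hmy, hey, hry, hρy'⟩ | ⟨_, _, _, _, hρy'⟩
            · have hxm : mx = mv := by omega
              have hym : my = mv := by omega
              rw [hex, hey, hxm, hym] at hxy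
              exact hirr _ hxy
            · omega
          · omega
        cases hv with
        | single h => exact hstep _ _ h
        | tail _ h => exact hstep _ _ h
      · -- v in B: same-rank cycle lives in one colored arc neighborhood
        obtain ⟨h1v, hlev, hmemv, hminv, hbackv, hfarv⟩ := hBfacts v hvB hvPs
        refine (hcol (f v) h1v hlev).2 s v (Relation.TransGen.mono ?_ v v hv)
        rintro x y ⟨⟨hx, hy, hxy⟩, hρx, hρy⟩
        have hget : ∀ z, z ∈ D r s → ρ z = ρ v →
            z ∈ col (f v) s ∩ ArcNbhd A (P (f v - 1)) (P (f v)) := by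
          intro z hz hρz
          rcases hrank r s z hz with ⟨mz, hmz, hez, hrz, hρz'⟩ | ⟨hzB, hzPs, hrz, hcolz, hρz'⟩
          · omega
          · obtain ⟨h1z, hlez, hmemz, hminz, hbackz, hfarz⟩ := hBfacts z hzB hzPs
            have hfeq : f z = f v := by omega
            rw [← hfeq]
            exact ⟨hcolz, hmemz, hbackz _ (by omega)⟩
        exact ⟨hget x hx hρx, hget y hy hρy, hxy⟩

end Aux

lemma chrom_k1 {A : V → V → Prop} (hT : IsTournament A) {t : ℕ} (hb : ArcBounded A t)
    {P : ℕ → V} (hP : IsShortestPath A P 1) :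
    ChromLE A ({w | A w (P 0) ∧ A (P 1) w} ∪ {w | ∃ i ≤ 1, w = P i}) (t + 2) := by
  classical
  obtain ⟨hasym, htot⟩ := hT
  have hirr : ∀ x, ¬ A x x := fun x h => hasym x x h h
  have harc : A (P 0) (P 1) := hP.1 0 (by omega)
  obtain ⟨C, hC1, hC2⟩ := hb _ _ harc
  set N := ArcNbhd A (P 0) (P 1) with hN
  set Cl : ℕ → Set V := fun m => if h : m < t then C ⟨m, h⟩ ∩ N
    else if m = t then {P 0} else {P 1} with hCl
  refine ⟨fun n => Cl n.val, ?_, ?_⟩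
  · intro x hx
    rcases hx with hxB | ⟨m, hm, he⟩
    · have hxN : x ∈ N := ⟨hxB.2, hxB.1⟩
      obtain ⟨s, hs⟩ := hC1 x hxN
      refine ⟨⟨s.val, by omega⟩, ?_⟩
      show x ∈ Cl s.val
      simp only [hCl]
      rw [dif_pos s.isLt]
      exact ⟨by simpa using hs, hxN⟩
    · interval_cases m
      · refine ⟨⟨t, by omega⟩, ?_⟩
        show x ∈ Cl t
        simp only [hCl]
        rw [dif_neg (by omega)]
        simp [he]
      · refine ⟨⟨t + 1, by omega⟩, ?_⟩
        show x ∈ Cl (t + 1)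
        simp only [hCl]
        rw [dif_neg (by omega), if_neg (by omega)]
        simp [he]
  · intro n
    apply acyclicOn_mono Set.inter_subset_left
    show AcyclicOn A (Cl n.val)
    simp only [hCl]
    by_cases h : n.val < t
    · rw [dif_pos h]
      simpa using hC2 ⟨n.val, h⟩
    · rw [dif_neg h]
      by_cases h2 : n.val = t
      · rw [if_pos h2]
        refine acyclicOn_of_no_arc ?_
        intro x hx y hy
        rw [Set.mem_singleton_iff] at hx hy
        rw [hx, hy]
        exact hirr _
      · rw [if_neg h2]
        refine acyclicOn_of_no_arc ?_
        intro x hx y hy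
        rw [Set.mem_singleton_iff] at hx hy
        rw [hx, hy]
        exact hirr _

lemma chrom_k2 {A : V → V → Prop} (hT : IsTournament A) {t : ℕ} (ht : 1 ≤ t)
    (hb : ArcBounded A t) {P : ℕ → V} (hP : IsShortestPath A P 2) :
    ChromLE A ({w | A w (P 0) ∧ A (P 2) w} ∪ {w | ∃ i ≤ 2, w = P i}) (2 * t + 1) := by
  classical
  obtain ⟨hasym, htot⟩ := hT
  have hirr : ∀ x, ¬ A x x := fun x h => hasym x x h h
  have h01 : A (P 0) (P 1) := hP.1 0 (by omega)
  have h12 : A (P 1) (P 2) := hP.1 1 (by omega)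
  obtain ⟨C1, hC11, hC12⟩ := hb _ _ h12
  obtain ⟨C2, hC21, hC22⟩ := hb _ _ h01
  set B : Set V := {w | A w (P 0) ∧ A (P 2) w} with hB
  set N1 := ArcNbhd A (P 1) (P 2) with hN1
  set N2 := ArcNbhd A (P 0) (P 1) with hN2
  set E1 : ℕ → Set V := fun s => if h : s < t then C1 ⟨s, h⟩ ∩ N1 ∩ B else ∅ with hE1
  set E2 : ℕ → Set V := fun s => if h : s < t then C2 ⟨s, h⟩ ∩ N2 ∩ B else ∅ with hE2
  have hmemE1 : ∀ s x, x ∈ E1 s → A x (P 1) ∧ A (P 2) x := by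
    intro s x hx
    simp only [hE1] at hx
    by_cases h : s < t
    · rw [dif_pos h] at hx
      exact ⟨hx.1.2.2, hx.1.2.1⟩
    · rw [dif_neg h] at hx
      exact absurd hx (Set.notMem_empty x)
  have hmemE2 : ∀ s x, x ∈ E2 s → A (P 1) x ∧ A (P 2) x := by
    intro s x hx
    simp only [hE2] at hx
    by_cases h : s < t
    · rw [dif_pos h] at hx
      exact ⟨hx.1.2.1, hx.2.2⟩
    · rw [dif_neg h] at hx
      exact absurd hx (Set.notMem_empty x)
  have hacE1 : ∀ s, AcyclicOn A (E1 s) := by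
    intro s
    simp only [hE1]
    by_cases h : s < t
    · rw [dif_pos h]
      exact acyclicOn_mono Set.inter_subset_left (hC12 ⟨s, h⟩)
    · rw [dif_neg h]
      exact acyclicOn_of_no_arc (fun x hx => absurd hx (Set.notMem_empty x))
  have hacE2 : ∀ s, AcyclicOn A (E2 s) := by
    intro s
    simp only [hE2]
    by_cases h : s < t
    · rw [dif_pos h]
      exact acyclicOn_mono Set.inter_subset_left (hC22 ⟨s, h⟩)
    · rw [dif_neg h]
      exact acyclicOn_of_no_arc (fun x hx => absurd hx (Set.notMem_empty x))
  set Cl : ℕ → Set V := fun m =>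
    if m < t then (if m = 0 then insert (P 1) (E1 m) else E1 m)
    else if m < 2 * t then (if m = t then insert (P 2) (E2 (m - t)) else E2 (m - t))
    else {P 0} with hCl
  have hPB1 : P 1 ∉ B := fun h => hasym _ _ h01 h.1
  refine ⟨fun n => Cl n.val, ?_, ?_⟩
  · intro x hx
    rcases hx with hxB | ⟨m, hm, he⟩
    · have hne : x ≠ P 1 := fun he => hPB1 (he ▸ hxB)
      rcases htot x (P 1) hne with hx1 | h1x
      · have hxN : x ∈ N1 := ⟨hxB.2, hx1⟩
        obtain ⟨s, hs⟩ := hC11 x hxN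
        refine ⟨⟨s.val, by omega⟩, ?_⟩
        show x ∈ Cl s.val
        simp only [hCl]
        rw [if_pos (show (s.val : ℕ) < t from s.isLt)]
        have hxE : x ∈ E1 s.val := by
          simp only [hE1]
          rw [dif_pos s.isLt]
          exact ⟨⟨by simpa using hs, hxN⟩, hxB⟩
        by_cases h0 : (s.val : ℕ) = 0
        · rw [if_pos h0]
          exact Set.mem_insert_of_mem _ (h0 ▸ hxE)
        · rw [if_neg h0]
          exact hxE
      · have hxN : x ∈ N2 := ⟨h1x, hxB.1⟩
        obtain ⟨s, hs⟩ := hC21 x hxN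
        refine ⟨⟨t + s.val, by omega⟩, ?_⟩
        show x ∈ Cl (t + s.val)
        simp only [hCl]
        rw [if_neg (by omega), if_pos (show t + s.val < 2 * t by have := s.isLt; omega)]
        have hxE : x ∈ E2 (t + s.val - t) := by
          have e : t + s.val - t = s.val := by omega
          rw [e]
          simp only [hE2]
          rw [dif_pos s.isLt]
          exact ⟨⟨by simpa using hs, hxN⟩, hxB⟩
        by_cases h0 : t + s.val = t
        · rw [if_pos h0]
          exact Set.mem_insert_of_mem _ hxE
        · rw [if_neg h0]
          exact hxE
    · interval_cases m
      · refine ⟨⟨2 * t, by omega⟩, ?_⟩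
        show x ∈ Cl (2 * t)
        simp only [hCl]
        rw [if_neg (by omega), if_neg (by omega)]
        simp [he]
      · refine ⟨⟨0, by omega⟩, ?_⟩
        show x ∈ Cl 0
        simp only [hCl]
        rw [if_pos (show (0:ℕ) < t by omega)]
        simp [he]
      · refine ⟨⟨t, by omega⟩, ?_⟩
        show x ∈ Cl t
        simp only [hCl]
        rw [if_neg (by omega), if_pos (show t < 2 * t by omega)]
        simp [he]
  · intro n
    apply acyclicOn_mono Set.inter_subset_left
    show AcyclicOn A (Cl n.val)
    simp only [hCl]
    by_cases h1 : n.val < t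
    · rw [if_pos h1]
      by_cases h0 : n.val = 0
      · rw [if_pos h0]
        refine acyclicOn_insert_sink (hacE1 _) ?_
        intro x hx
        rcases Set.mem_insert_iff.mp hx with rfl | hxE
        · exact hirr _
        · intro hP1x
          exact hasym _ _ (hmemE1 _ _ hxE).1 hP1x
      · rw [if_neg h0]
        exact hacE1 _
    · rw [if_neg h1]
      by_cases h2 : n.val < 2 * t
      · rw [if_pos h2]
        by_cases h0 : n.val = t
        · rw [if_pos h0]
          refine acyclicOn_insert_source (hacE2 _) ?_
          intro x hx
          rcases Set.mem_insert_iff.mp hx with rfl | hxE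
          · exact hirr _
          · intro hxP2
            exact hasym _ _ (hmemE2 _ _ hxE).2 hxP2
        · rw [if_neg h0]
          exact hacE2 _
      · rw [if_neg h2]
        refine acyclicOn_of_no_arc ?_
        intro x hx y hy
        rw [Set.mem_singleton_iff] at hx hy
        rw [hx, hy]
        exact hirr _

theorem stmt3 (A : V → V → Prop) (hT : IsTournament A) (hsc : StronglyConnected A)
    (t : ℕ) (hb : ArcBounded A t) (P : ℕ → V) (k : ℕ) (hP : IsShortestPath A P k)
    (S : Set V) (hS : S = {w | A w (P 0) ∧ A (P k) w} ∪ {w | ∃ i ≤ k, w = P i}) :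
    (3 ≤ k → ChromLE A S (5 * t)) ∧ (k = 2 → ChromLE A S (2 * t + 1)) ∧
      (k = 1 → ChromLE A S (t + 2)) ∧ (2 ≤ t → ChromLE A S (5 * t)) := by
  subst hS
  refine ⟨fun hk => main5t hT (tpos hT hb hP (by omega)) hb hP, ?_, ?_,
    fun ht2 => main5t hT (by omega) hb hP⟩
  · intro hk
    subst hk
    exact chrom_k2 hT (tpos hT hb hP (by omega)) hb hP
  · intro hk
    subst hk
    exact chrom_k1 hT hb hP
end

section
/- Let T be a t-arc-bounded tournament and let X = (X_1, ..., X_p) be a jewel-chain in T, i.e., disjoint vertex sets with all arcs between X_i and X_{i+1} going from X_i to X_{i+1}, and each T[X_i] strongly connected with χ⃗(T[X_i]) ≥ t+1. Then X contains no backward arc: every arc between X_i and X_j with i < j goes from X_i to X_j. -/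
variable {V : Type*}

/-! Induction on `j - i`. For `u ∈ X i` and `v ∈ X j` with `i + 1 < j`, every `w ∈ X (i + 1)`
satisfies `u → w` (chain) and `w → v` (induction). So a backward arc `v → u` would put all of
`X (i + 1)` inside `N(vu)`, giving `χ⃗(T[X (i + 1)]) ≤ t`, against `χ⃗(T[X (i + 1)]) ≥ t + 1`. -/

variable {A : V → V → Prop}

theorem ChromLE.mono {S S' : Set V} {k : ℕ} (hS : S ⊆ S') (h : ChromLE A S' k) :
    ChromLE A S k := by
  obtain ⟨C, hcover, hacyclic⟩ := h
  refine ⟨C, fun v hv => hcover v (hS hv), fun i v hcycle => hacyclic i v ?_⟩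
  exact Relation.TransGen.mono
    (fun x y hxy => ⟨⟨hxy.1.1, hS hxy.1.2⟩, ⟨hxy.2.1.1, hS hxy.2.1.2⟩, hxy.2.2⟩) v v hcycle

theorem ArcBounded.not_subset_arcNbhd {t : ℕ} (hb : ArcBounded A t) {S : Set V}
    (hS : ChromGE A S (t + 1)) {u v : V} (huv : A u v) : ¬ S ⊆ ArcNbhd A u v := fun hsub =>
  absurd (hS t ((hb u v huv).mono hsub)) (Nat.not_succ_le_self t)

theorem IsTournament.arc_of_not_arc (hT : IsTournament A) {u v : V} (hne : u ≠ v)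
    (h : ¬ A v u) : A u v :=
  (hT.2 u v hne).resolve_right h

theorem ArcBounded.arc_of_chain {t p : ℕ} (hT : IsTournament A) (hb : ArcBounded A t)
    {X : ℕ → Set V} (hdisj : ∀ i j, i < j → j < p → Disjoint (X i) (X j))
    (hchain : ∀ i, i + 1 < p → ∀ u ∈ X i, ∀ v ∈ X (i + 1), A u v)
    (hchrom : ∀ i < p, ChromGE A (X i) (t + 1)) (d : ℕ) :
    ∀ i, i + d + 1 < p → ∀ u ∈ X i, ∀ v ∈ X (i + d + 1), A u v := by
  induction d with
  | zero => exact hchain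
  | succ d ih =>
    intro i hp u hu v hv
    have hne : u ≠ v := fun h =>
      Set.disjoint_left.mp (hdisj i _ (by omega) hp) hu (h ▸ hv)
    refine hT.arc_of_not_arc hne fun hvu =>
      hb.not_subset_arcNbhd (hchrom (i + 1) (by omega)) hvu ?_
    intro w hw
    have hv' : v ∈ X (i + 1 + d + 1) := by rwa [show i + 1 + d + 1 = i + (d + 1) + 1 by omega]
    exact ⟨hchain i (by omega) u hu w hw, ih (i + 1) (by omega) w hw v hv'⟩

theorem stmt6_general (A : V → V → Prop) (hT : IsTournament A) (t p : ℕ)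
    (hb : ArcBounded A t) (X : ℕ → Set V)
    (hdisj : ∀ i j, i < j → j < p → Disjoint (X i) (X j))
    (hchain : ∀ i, i + 1 < p → ∀ u ∈ X i, ∀ v ∈ X (i + 1), A u v)
    (hchrom : ∀ i < p, ChromGE A (X i) (t + 1)) :
    ∀ i j, i < j → j < p → ∀ u ∈ X i, ∀ v ∈ X j, A u v ∧ ¬ A v u := by
  intro i j hij hjp u hu v hv
  have hj : j = i + (j - i - 1) + 1 := by omega
  have huv : A u v :=
    hb.arc_of_chain hT hdisj hchain hchrom (j - i - 1) i (by omega) u hu v (hj ▸ hv)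
  exact ⟨huv, hT.1 u v huv⟩

theorem stmt6 (A : V → V → Prop) (hT : IsTournament A) (t p : ℕ)
    (hb : ArcBounded A t) (X : ℕ → Set V)
    (hdisj : ∀ i j, i < j → j < p → Disjoint (X i) (X j))
    (hchain : ∀ i, i + 1 < p → ∀ u ∈ X i, ∀ v ∈ X (i + 1), A u v)
    (hsc : ∀ i < p, StronglyConnectedOn A (X i))
    (hchrom : ∀ i < p, ChromGE A (X i) (t + 1)) :
    ∀ i j, i < j → j < p → ∀ u ∈ X i, ∀ v ∈ X j, A u v ∧ ¬ A v u :=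
  stmt6_general A hT t p hb X hdisj hchain hchrom
end

section
/- Every oriented graph D with independence number at most α and domination number at least α + 1 contains a directed cycle of length at most 2α + 1. -/
variable {V : Type*}

private lemma walk_of_transGen' {A : V → V → Prop} {u w : V}
    (h : Relation.TransGen A u w) :
    ∃ n : ℕ, ∃ c : ℕ → V, 0 < n ∧ c 0 = u ∧ c n = w ∧ ∀ i < n, A (c i) (c (i+1)) := by
  induction h with
  | single hb =>
    rename_i b
    refine ⟨1, fun i => if i = 0 then u else b, one_pos, rfl, rfl, ?_⟩
    intro i hi
    have : i = 0 := by omega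
    subst this
    simpa using hb
  | tail hub hbx ih =>
    rename_i b x
    obtain ⟨n, c, hn, h0, hnb, hstep⟩ := ih
    refine ⟨n+1, fun i => if i ≤ n then c i else x, n.succ_pos, by simp [h0], by simp, ?_⟩
    intro i hi
    rcases Nat.lt_or_ge i n with h | h
    · simp only [if_pos (Nat.le_of_lt h), if_pos (Nat.succ_le_of_lt h)]
      exact hstep i h
    · have hi' : i = n := by omega
      simp only [if_pos (le_of_eq hi'), if_neg (show ¬ i + 1 ≤ n by omega)]
      rw [hi', hnb]
      exact hbx

private lemma exists_idom' [Fintype V] (A : V → V → Prop)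
    (hac : ∀ v, ¬ Relation.TransGen A v v) (T : Finset V) :
    ∃ S : Finset V, S ⊆ T ∧ (∀ x ∈ S, ∀ y ∈ S, ¬ A x y) ∧
      ∀ v ∈ T, v ∉ S → ∃ u ∈ S, A u v := by
  classical
  induction T using Finset.strongInduction with
  | _ T ih =>
  rcases T.eq_empty_or_nonempty with rfl | hne
  · exact ⟨∅, Finset.Subset.refl _, by simp, by simp⟩
  · haveI : IsIrrefl V (Relation.TransGen A) := ⟨hac⟩
    have hwfT : WellFounded (Relation.TransGen A) :=
      Finite.wellFounded_of_trans_of_irrefl _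
    have hwf : WellFounded A := Subrelation.wf (fun h => Relation.TransGen.single h) hwfT
    obtain ⟨v, hvT0, hvmin0⟩ := hwf.has_min (↑T) (by exact_mod_cast hne)
    have hvT : v ∈ T := by exact_mod_cast hvT0
    have hvmin : ∀ x ∈ T, ¬ A x v := fun x hx => hvmin0 x (by exact_mod_cast hx)
    set F : Finset V := T.filter (fun u => u = v ∨ A v u) with hF
    have hvF : v ∈ F := by simp [hF, hvT]
    have hss : T \ F ⊂ T := by
      refine Finset.ssubset_iff_of_subset (Finset.sdiff_subset) |>.mpr ⟨v, hvT, by simp [hvF]⟩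
    obtain ⟨S', hS'sub, hS'ind, hS'dom⟩ := ih _ hss
    have hS'T : ∀ z ∈ S', z ∈ T ∧ z ∉ F := fun z hz => Finset.mem_sdiff.mp (hS'sub hz)
    refine ⟨insert v S', ?_, ?_, ?_⟩
    · intro z hz
      rcases Finset.mem_insert.mp hz with h | h
      · exact h ▸ hvT
      · exact (hS'T z h).1
    · intro p hp q hq hpq
      rcases Finset.mem_insert.mp hp with h1 | h1
      · rcases Finset.mem_insert.mp hq with h2 | h2
        · exact hvmin p (h1 ▸ hvT) (h2 ▸ (h1 ▸ hpq))
        · refine (hS'T q h2).2 ?_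
          rw [hF, Finset.mem_filter]
          exact ⟨(hS'T q h2).1, Or.inr (h1 ▸ hpq)⟩
      · rcases Finset.mem_insert.mp hq with h2 | h2
        · exact hvmin p (hS'T p h1).1 (h2 ▸ hpq)
        · exact hS'ind p h1 q h2 hpq
    · intro w hwT hwS
      by_cases hwF : w ∈ F
      · rcases (Finset.mem_filter.mp hwF).2 with h | hvw
        · exact absurd (h ▸ Finset.mem_insert_self v S') hwS
        · exact ⟨v, Finset.mem_insert_self _ _, hvw⟩
      · obtain ⟨u, huS', huw⟩ := hS'dom w (Finset.mem_sdiff.mpr ⟨hwT, hwF⟩)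
          (fun h => hwS (Finset.mem_insert_of_mem h))
        exact ⟨u, Finset.mem_insert_of_mem huS', huw⟩

theorem stmt9 [Fintype V] (A : V → V → Prop) (hD : ∀ u v, A u v → ¬ A v u) (α : ℕ)
    (hind : ∀ I : Finset V, (∀ x ∈ I, ∀ y ∈ I, ¬ A x y) → I.card ≤ α)
    (hdom : ∀ S : Finset V, (∀ v ∉ S, ∃ u ∈ S, A u v) → α + 1 ≤ S.card) :
    ∃ n, 1 ≤ n ∧ n ≤ 2 * α + 1 ∧ ∃ c : ℕ → V, (∀ i < n, A (c i) (c (i + 1))) ∧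
      c n = c 0 ∧ ∀ i < n, ∀ j < n, c i = c j → i = j := by
  classical
  by_cases hcyc : ∃ v, Relation.TransGen A v v
  · obtain ⟨v, hv⟩ := hcyc
    obtain ⟨n0, c0, hn0, h00, h0n, hstep0⟩ := walk_of_transGen' hv
    have hPex : ∃ n : ℕ, 0 < n ∧ ∃ c : ℕ → V,
        (∀ i < n, A (c i) (c (i+1))) ∧ c n = c 0 := ⟨n0, hn0, c0, hstep0, by rw [h0n, h00]⟩
    set g := Nat.find hPex with hgdef
    obtain ⟨hg, c, hc, hcg⟩ := Nat.find_spec hPex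
    have hmin : ∀ m, (0 < m ∧ ∃ c' : ℕ → V,
        (∀ i < m, A (c' i) (c' (i+1))) ∧ c' m = c' 0) → g ≤ m :=
      fun m hm => Nat.find_min' hPex hm
    have inj : ∀ i < g, ∀ j < g, c i = c j → i = j := by
      have key : ∀ i j, i < j → j < g → c i = c j → False := by
        intro i j hij hj heq
        have hP : 0 < j - i ∧ ∃ c' : ℕ → V,
            (∀ k < j - i, A (c' k) (c' (k+1))) ∧ c' (j-i) = c' 0 := by
          refine ⟨by omega, fun k => c (i + k), ?_, ?_⟩
          · intro k hk
            exact hc (i + k) (by omega)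
          · show c (i + (j - i)) = c (i + 0)
            rw [Nat.add_zero, show i + (j - i) = j by omega]
            exact heq.symm
        have := hmin _ hP
        omega
      intro i hi j hj heq
      rcases lt_trichotomy i j with h | h | h
      · exact (key i j h hj heq).elim
      · exact h
      · exact (key j i h hi heq.symm).elim
    have stepmod : ∀ m : ℕ, A (c (m % g)) (c ((m+1) % g)) := by
      intro m
      have hr : m % g < g := Nat.mod_lt _ hg
      rw [← Nat.mod_add_mod]
      rcases Nat.lt_or_ge (m % g + 1) g with h | h
      · rw [Nat.mod_eq_of_lt h]
        exact hc _ hr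
      · have heq : m % g + 1 = g := by omega
        have hstep := hc (m % g) hr
        rw [heq, hcg] at hstep
        rw [heq, Nat.mod_self]
        exact hstep
    have chord : ∀ a < g, ∀ b < g, A (c a) (c b) →
        g ≤ (if b ≤ a then a - b else g + a - b) + 1 := by
      intro a ha b hb harc
      set d := if b ≤ a then a - b else g + a - b with hd
      have hbd : (b + d) % g = a := by
        rcases le_or_gt b a with h | h
        · rw [hd, if_pos h, show b + (a - b) = a by omega, Nat.mod_eq_of_lt ha]
        · rw [hd, if_neg (by omega), show b + (g + a - b) = g + a by omega,
            Nat.add_mod_left, Nat.mod_eq_of_lt ha]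
      refine hmin _ ⟨Nat.succ_pos d, fun k => if k ≤ d then c ((b + k) % g) else c b, ?_, ?_⟩
      · intro k hk
        rcases Nat.lt_or_ge k d with h | h
        · simp only [if_pos (Nat.le_of_lt h), if_pos (Nat.succ_le_of_lt h)]
          exact stepmod (b + k)
        · have hk' : k = d := by omega
          simp only [if_pos (le_of_eq hk'), if_neg (show ¬ k + 1 ≤ d by omega)]
          rw [hk', hbd]
          exact harc
      · simp only [if_neg (show ¬ d + 1 ≤ d by omega), if_pos (Nat.zero_le d)]
        rw [Nat.add_zero, Nat.mod_eq_of_lt hb]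
    by_cases hgle : g ≤ 2 * α + 1
    · exact ⟨g, hg, hgle, c, hc, hcg, inj⟩
    · exfalso
      push_neg at hgle
      set I : Finset V := (Finset.range (α+1)).image (fun i => c (2*i)) with hI
      have hIind : ∀ x ∈ I, ∀ y ∈ I, ¬ A x y := by
        intro x hx y hy hxy
        rw [hI, Finset.mem_image] at hx hy
        obtain ⟨i, hi, rfl⟩ := hx
        obtain ⟨j, hj, rfl⟩ := hy
        rw [Finset.mem_range] at hi hj
        by_cases hij : i = j
        · subst hij
          exact hD _ _ hxy hxy
        · have hcb := chord (2*i) (by omega) (2*j) (by omega) hxy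
          rcases le_or_gt (2*j) (2*i) with h | h
          · rw [if_pos h] at hcb; omega
          · rw [if_neg (by omega)] at hcb; omega
      have hcard : I.card = α + 1 := by
        rw [hI, Finset.card_image_of_injOn, Finset.card_range]
        intro i hi j hj heq
        simp only [Finset.coe_range, Set.mem_Iio] at hi hj
        have := inj (2*i) (by omega) (2*j) (by omega) heq
        omega
      have := hind I hIind
      omega
  · push_neg at hcyc
    obtain ⟨S, _, hSind, hSdom⟩ := exists_idom' A hcyc Finset.univ
    have h1 := hind S hSind
    have h2 := hdom S (fun v hv => hSdom v (Finset.mem_univ v) hv)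
    omega
end

section
/- Every acyclic digraph has an independent dominating set, i.e., a set S of pairwise non-adjacent vertices such that every vertex outside S has an in-neighbor in S. -/
variable {V : Type*}

lemma aux_kernel [Fintype V] (A : V → V → Prop)
    (hacyc : ∀ v, ¬ Relation.TransGen A v v) :
    ∀ n (T : Finset V), T.card ≤ n →
      ∃ S : Set V, (∀ v ∈ S, v ∈ T) ∧ (∀ u ∈ S, ∀ v ∈ S, ¬ A u v) ∧
        ∀ v ∈ T, v ∉ S → ∃ u ∈ S, A u v := by
  classical
  have hirr : IsIrrefl V (Relation.TransGen A) := ⟨hacyc⟩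
  have hwf' : WellFounded (Relation.TransGen A) :=
    Finite.wellFounded_of_trans_of_irrefl _
  have hwf : WellFounded A :=
    Subrelation.wf (fun h => Relation.TransGen.single h) hwf'
  intro n
  induction n with
  | zero =>
    intro T hT
    refine ⟨∅, by simp, by simp, ?_⟩
    intro v hv _
    simp [Finset.card_eq_zero.mp (Nat.le_zero.mp hT)] at hv
  | succ n ih =>
    intro T hT
    rcases T.eq_empty_or_nonempty with rfl | hne
    · exact ⟨∅, by simp, by simp, by simp⟩
    · obtain ⟨x, hxT, hmin⟩ := hwf.has_min ↑T (by exact_mod_cast hne)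
      set T' : Finset V := T.filter (fun v => v ≠ x ∧ ¬ A x v) with hT'
      have hsub : ∀ v ∈ T', v ∈ T := fun v hv => (Finset.mem_filter.mp hv).1
      have hxnot : x ∉ T' := by simp [hT']
      have hcard : T'.card ≤ n := by
        have h1 : T'.card < T.card :=
          Finset.card_lt_card ⟨Finset.filter_subset _ _, fun h => hxnot (h hxT)⟩
        omega
      obtain ⟨S', hS'sub, hS'ind, hS'dom⟩ := ih T' hcard
      refine ⟨insert x S', ?_, ?_, ?_⟩
      · intro v hv
        rcases hv with rfl | hv
        · exact hxT
        · exact hsub v (hS'sub v hv)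
      · intro u hu v hv hA
        rcases hu with rfl | hu <;> rcases hv with rfl | hv
        · exact hacyc _ (Relation.TransGen.single hA)
        · exact (Finset.mem_filter.mp (hS'sub v hv)).2.2 hA
        · exact hmin u (hsub u (hS'sub u hu)) hA
        · exact hS'ind u hu v hv hA
      · intro v hvT hvS
        have hvx : v ≠ x := fun h => hvS (h ▸ Set.mem_insert x S')
        by_cases hAx : A x v
        · exact ⟨x, Set.mem_insert x S', hAx⟩
        · have hvT' : v ∈ T' := Finset.mem_filter.mpr ⟨hvT, hvx, hAx⟩
          have hvS' : v ∉ S' := fun h => hvS (Set.mem_insert_of_mem _ h)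
          obtain ⟨u, huS', hu⟩ := hS'dom v hvT' hvS'
          exact ⟨u, Set.mem_insert_of_mem _ huS', hu⟩

theorem stmt10 [Fintype V] (A : V → V → Prop)
    (hacyc : ∀ v, ¬ Relation.TransGen A v v) :
    ∃ S : Set V, (∀ u ∈ S, ∀ v ∈ S, ¬ A u v) ∧ ∀ v ∉ S, ∃ u ∈ S, A u v := by
  obtain ⟨S, _, hind, hdom⟩ :=
    aux_kernel A hacyc (Finset.univ.card) Finset.univ le_rfl
  exact ⟨S, hind, fun v hv => hdom v (Finset.mem_univ v) hv⟩
end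

section
/- Let G be the 'backedge graph' of a tournament T: fix an ordering v_1,...,v_n of V(T) and let G be the undirected graph whose edges are the pairs {v_i, v_j} with i < j such that the arc of T goes from v_j to v_i. Then χ⃗(T) ≤ χ(G) ≤ ω(G) · χ⃗(T). -/
variable {V : Type*}

/-! An independent set of the backedge graph `G` has all its arcs pointing forward in the
ordering, so it is acyclic: a colouring of `G` is a partition of `T` into acyclic sets.
Conversely, an acyclic set `S` is transitive, and on it `G` is the comparability graph of the
strict order "`x` precedes `y` and the arc goes from `y` to `x`". Colouring each vertex by the
size of the largest clique of `G[S]` lying strictly below it uses fewer than `ω(G)` colours, and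
pairing this colour with the index of the acyclic set containing the vertex colours `G` with
`ω(G) · k` colours. -/

lemma AcyclicOn.of_strictMono {β : Type*} [Preorder β] {A : V → V → Prop} {S : Set V}
    (f : V → β) (hf : ∀ x ∈ S, ∀ y ∈ S, A x y → f x < f y) : AcyclicOn A S := by
  intro v hcyc
  have hlt : Relation.TransGen (· < ·) (f v) (f v) :=
    Relation.TransGen.lift f (fun x y hxy => hf x hxy.1 y hxy.2.1 hxy.2.2) v v hcyc
  rw [Relation.transGen_eq_self] at hlt
  exact lt_irrefl _ hlt

lemma AcyclicOn.trans {A : V → V → Prop} (hT : IsTournament A) {S : Set V}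
    (hS : AcyclicOn A S) {x y z : V} (hx : x ∈ S) (hy : y ∈ S) (hz : z ∈ S)
    (hxy : A x y) (hyz : A y z) : A x z := by
  have hxyz : Relation.TransGen (fun a b => a ∈ S ∧ b ∈ S ∧ A a b) x z :=
    .tail (.single ⟨hx, hy, hxy⟩) ⟨hy, hz, hyz⟩
  rcases eq_or_ne x z with rfl | hne
  · exact absurd hxyz (hS x)
  refine (hT.2 x z hne).resolve_right fun hzx => hS z ?_
  exact .head ⟨hz, hx, hzx⟩ hxyz

namespace SimpleGraph

variable {G : SimpleGraph V}

theorem colorable_mul_card_of_cover {ι : Type*} [Fintype ι] {n : ℕ} (C : ι → Set V)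
    (hcov : ∀ v, ∃ i, v ∈ C i) (hC : ∀ i, (G.induce (C i)).Colorable n) :
    G.Colorable (n * Fintype.card ι) := by
  choose piece hpiece using hcov
  have c i := (hC i).some
  have hvalid : ∀ {x y} i j (hx : x ∈ C i) (hy : y ∈ C j), G.Adj x y → i = j →
      c i ⟨x, hx⟩ ≠ c j ⟨y, hy⟩ := by
    rintro x y i _ hx hy hxy rfl
    exact (c i).valid hxy
  let col : G.Coloring (Fin n × ι) :=
    Coloring.mk (fun v => (c (piece v) ⟨v, hpiece v⟩, piece v)) fun hxy heq =>
      hvalid _ _ _ _ hxy (congrArg Prod.snd heq) (congrArg Prod.fst heq)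
  simpa using col.colorable

section CliqueHeight

variable [Fintype V] {r : V → V → Prop} {S : Set V}

noncomputable def cliqueHeight (G : SimpleGraph V) (r : V → V → Prop) (S : Set V) (v : V) : ℕ :=
  sSup {n | ∃ K : Finset V, G.IsNClique n K ∧ ↑K ⊆ S ∧ ∀ w ∈ K, r w v}

lemma bddAbove_cliqueHeight_set (v : V) :
    BddAbove {n | ∃ K : Finset V, G.IsNClique n K ∧ ↑K ⊆ S ∧ ∀ w ∈ K, r w v} := by
  refine ⟨G.cliqueNum, ?_⟩
  rintro _ ⟨K, hK, -⟩
  exact hK.card_eq ▸ hK.isClique.card_le_cliqueNum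

lemma exists_isNClique_cliqueHeight (v : V) :
    ∃ K : Finset V, G.IsNClique (G.cliqueHeight r S v) K ∧ ↑K ⊆ S ∧ ∀ w ∈ K, r w v := by
  refine Nat.sSup_mem ?_ (bddAbove_cliqueHeight_set v)
  exact ⟨0, ∅, by simp⟩

variable (hadj : ∀ x ∈ S, ∀ y ∈ S, G.Adj x y ↔ r x y ∨ r y x)
include hadj

lemma cliqueHeight_lt_cliqueNum {v : V} (hv : v ∈ S) : G.cliqueHeight r S v < G.cliqueNum := by
  classical
  obtain ⟨K, hK, hKS, hKv⟩ := G.exists_isNClique_cliqueHeight (r := r) (S := S) v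
  have hvK := hK.insert fun w hw => (hadj v hv w (hKS hw)).2 (.inr (hKv w hw))
  have hcard := hvK.isClique.card_le_cliqueNum
  rw [hvK.card_eq] at hcard
  exact hcard

lemma cliqueHeight_lt_of_rel
    (htrans : ∀ x ∈ S, ∀ y ∈ S, ∀ z ∈ S, r x y → r y z → r x z)
    {x y : V} (hx : x ∈ S) (hy : y ∈ S) (hxy : r x y) :
    G.cliqueHeight r S x < G.cliqueHeight r S y := by
  classical
  obtain ⟨K, hK, hKS, hKx⟩ := G.exists_isNClique_cliqueHeight (r := r) (S := S) x
  have hxK := hK.insert fun w hw => (hadj x hx w (hKS hw)).2 (.inr (hKx w hw))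
  refine Nat.lt_of_succ_le (le_csSup (bddAbove_cliqueHeight_set y) ⟨_, hxK, ?_, ?_⟩)
  · simpa [Set.insert_subset_iff] using ⟨hx, hKS⟩
  · simp only [Finset.mem_insert, forall_eq_or_imp]
    exact ⟨hxy, fun w hw => htrans w (hKS hw) x hx y hy (hKx w hw) hxy⟩

theorem colorable_induce_cliqueNum_of_adj_iff
    (htrans : ∀ x ∈ S, ∀ y ∈ S, ∀ z ∈ S, r x y → r y z → r x z) :
    (G.induce S).Colorable G.cliqueNum := by
  refine ⟨Coloring.mk (fun v => ⟨G.cliqueHeight r S v, cliqueHeight_lt_cliqueNum hadj v.2⟩) ?_⟩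
  intro x y hxy heq
  rw [Fin.mk.injEq] at heq
  rcases (hadj x x.2 y y.2).1 hxy with h | h
  · exact (cliqueHeight_lt_of_rel hadj htrans x.2 y.2 h).ne heq
  · exact (cliqueHeight_lt_of_rel hadj htrans y.2 x.2 h).ne' heq

end CliqueHeight

end SimpleGraph

def IsBackedgeGraph (A : V → V → Prop) (ord : V → ℕ) (G : SimpleGraph V) : Prop :=
  ∀ x y, G.Adj x y ↔ ((ord x < ord y ∧ A y x) ∨ (ord y < ord x ∧ A x y))

namespace IsBackedgeGraph

variable {A : V → V → Prop} {ord : V → ℕ} {G : SimpleGraph V} {S : Set V}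

lemma acyclicOn_of_isIndepSet (hG : IsBackedgeGraph A ord G) (hT : IsTournament A)
    (hord : Function.Injective ord) (hS : G.IsIndepSet S) : AcyclicOn A S := by
  refine AcyclicOn.of_strictMono ord fun x hx y hy hxy => ?_
  have hne : x ≠ y := by rintro rfl; exact hT.1 x x hxy hxy
  have hnadj := (hG x y).not.1 (hS hx hy hne)
  rcases (hord.ne hne).lt_or_gt with hlt | hgt
  · exact hlt
  · exact absurd hxy (not_and.1 (not_or.1 hnadj).2 hgt)

lemma colorable_induce_of_acyclicOn [Fintype V] (hG : IsBackedgeGraph A ord G)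
    (hT : IsTournament A) (hS : AcyclicOn A S) : (G.induce S).Colorable G.cliqueNum :=
  SimpleGraph.colorable_induce_cliqueNum_of_adj_iff (r := fun x y => ord x < ord y ∧ A y x)
    (fun x _ y _ => hG x y) fun _ hx _ hy _ hz hxy hyz =>
      ⟨hxy.1.trans hyz.1, hS.trans hT hz hy hx hyz.2 hxy.2⟩

end IsBackedgeGraph

theorem stmt14 [Fintype V] (A : V → V → Prop) (hT : IsTournament A)
    (ord : V → ℕ) (hord : Function.Injective ord) (G : SimpleGraph V)
    (hG : ∀ x y, G.Adj x y ↔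
      ((ord x < ord y ∧ A y x) ∨ (ord y < ord x ∧ A x y))) :
    (∀ m : ℕ, G.Colorable m → ChromLE A Set.univ m) ∧
      (∀ k : ℕ, ChromLE A Set.univ k → G.Colorable (G.cliqueNum * k)) := by
  have hB : IsBackedgeGraph A ord G := hG
  constructor
  · rintro m ⟨c⟩
    refine ⟨c.colorClass, fun v _ => ⟨c v, rfl⟩, fun i => ?_⟩
    rw [Set.inter_univ]
    exact hB.acyclicOn_of_isIndepSet hT hord (c.isIndepSet_colorClass i)
  · rintro k ⟨C, hcov, hacy⟩
    have hcol i : (G.induce (C i)).Colorable G.cliqueNum :=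
      hB.colorable_induce_of_acyclicOn hT (by simpa using hacy i)
    simpa using G.colorable_mul_card_of_cover C (fun v => hcov v trivial) hcol
end

section
/- Let T be a tournament, fix t ≥ 1 and a function s with s(t) ≥ t² · s(t−1) + t. Call an arc e t-heavy if T[N(e)] contains a set S with |S| ≤ s(t−1) and χ⃗(T[S]) ≥ t−1 (and T[S] strongly connected), and suppose T contains no set of size at most s(t) with chromatic number ≥ t. Let G_H be the undirected graph on V(T) whose edges are the t-heavy arcs. Then G_H contains no clique on t vertices: ω(G_H) ≤ t − 1. -/
variable {V : Type*}

/-!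
A clique `W` of `t` heavy arcs, together with a `(t - 1)`-cluster inside the neighbourhood of
each of its arcs, spans at most `t + t² s(t - 1) ≤ s(t)` vertices. In a dicolouring of this set
with fewer than `t` colours two vertices `u, v` of `W` share a colour `i`, joined by a heavy arc
`uv`, say. Every `w ∈ N(uv)` closes a 3-cycle `u → v → w → u`, so colour `i` misses the cluster
of `uv`, which is then coloured with fewer than `t - 1` colours.
-/

def IsDicolouring (A : V → V → Prop) (S : Set V) {m : ℕ} (C : Fin m → Set V) : Prop :=
  (∀ v ∈ S, ∃ i, v ∈ C i) ∧ ∀ i, AcyclicOn A (C i ∩ S)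

lemma AcyclicOn.mono {A : V → V → Prop} {S T : Set V} (h : AcyclicOn A T) (hST : S ⊆ T) :
    AcyclicOn A S := fun v hv =>
  h v (Relation.TransGen.mono (fun _ _ ⟨hx, hy, hxy⟩ => ⟨hST hx, hST hy, hxy⟩) v v hv)

lemma AcyclicOn.not_cycle3 {A : V → V → Prop} {S : Set V} (h : AcyclicOn A S)
    {u v w : V} (hu : u ∈ S) (hv : v ∈ S) (hw : w ∈ S) (huv : A u v) (hvw : A v w)
    (hwu : A w u) : False :=
  h u (((Relation.TransGen.single ⟨hu, hv, huv⟩).tail ⟨hv, hw, hvw⟩).tail ⟨hw, hu, hwu⟩)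

namespace IsDicolouring

variable {A : V → V → Prop} {S U : Set V} {m : ℕ}

lemma chromLE {C : Fin m → Set V} (hC : IsDicolouring A S C) : ChromLE A S m := ⟨C, hC⟩

lemma mono {C : Fin m → Set V} (hC : IsDicolouring A U C) (hSU : S ⊆ U) :
    IsDicolouring A S C :=
  ⟨fun v hv => hC.1 v (hSU hv),
    fun i => (hC.2 i).mono (Set.inter_subset_inter_right _ hSU)⟩

lemma succAbove {C : Fin (m + 1) → Set V} (hC : IsDicolouring A S C) {i : Fin (m + 1)}
    (hi : ∀ w ∈ S, w ∉ C i) : IsDicolouring A S (fun j => C (i.succAbove j)) := by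
  refine ⟨fun w hw => ?_, fun j => hC.2 _⟩
  obtain ⟨j, hj⟩ := hC.1 w hw
  obtain ⟨k, rfl⟩ := Fin.exists_succAbove_eq (fun h : j = i => hi w hw (h ▸ hj))
  exact ⟨k, hj⟩

lemma lt_of_arc_mem_colour {C : Fin m → Set V} (hC : IsDicolouring A U C) {u v : V}
    (huv : A u v) {i : Fin m} (hu : u ∈ C i ∩ U) (hv : v ∈ C i ∩ U) (hSU : S ⊆ U)
    (hS : S ⊆ ArcNbhd A u v) {k : ℕ} (hk : ChromGE A S k) : k < m := by
  cases m with
  | zero => exact i.elim0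
  | succ m =>
    have hmiss : ∀ w ∈ S, w ∉ C i := fun w hwS hwi =>
      (hC.2 i).not_cycle3 hu hv ⟨hwi, hSU hwS⟩ huv (hS hwS).1 (hS hwS).2
    exact Nat.lt_succ_of_le (hk m ((hC.mono hSU).succAbove hmiss).chromLE)

end IsDicolouring

theorem chromGE_card_of_heavy_clique {A : V → V → Prop} {U : Set V} {W : Finset V} {k : ℕ}
    (hWU : ↑W ⊆ U) (hk : W.card ≤ k + 1) (H : V → V → Prop)
    (hH : ∀ u ∈ W, ∀ v ∈ W, H u v → A u v ∧ ∃ S ⊆ U, S ⊆ ArcNbhd A u v ∧ ChromGE A S k)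
    (hclique : ∀ x ∈ W, ∀ y ∈ W, x ≠ y → H x y ∨ H y x) :
    ChromGE A U W.card := by
  intro m ⟨C, hC⟩
  replace hC : IsDicolouring A U C := hC
  by_contra! hm
  let colour : W → Fin m := fun x => (hC.1 x (hWU x.2)).choose
  have hcolour (x : W) : (x : V) ∈ C (colour x) ∩ U :=
    ⟨(hC.1 x (hWU x.2)).choose_spec, hWU x.2⟩
  obtain ⟨x, y, hxy, hsame⟩ := Fintype.exists_ne_map_eq_of_card_lt colour (by simpa using hm)
  have hlt : ∀ a b : W, colour a = colour b → H a b → k < m := by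
    intro a b hab hHab
    obtain ⟨harc, S, hSU, hS, hSk⟩ := hH a a.2 b b.2 hHab
    exact hC.lt_of_arc_mem_colour harc (hcolour a) (hab ▸ hcolour b) hSU hS hSk
  have hkm : k < m := (hclique x x.2 y y.2 (Subtype.coe_injective.ne hxy)).elim
    (hlt x y hsame) (hlt y x hsame.symm)
  omega

lemma card_union_biUnion_product_le [DecidableEq V] (W : Finset V) (F : V × V → Finset V)
    {b : ℕ} (hF : ∀ p, (F p).card ≤ b) :
    (W ∪ (W ×ˢ W).biUnion F).card ≤ W.card ^ 2 * b + W.card := by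
  calc (W ∪ (W ×ˢ W).biUnion F).card
      ≤ W.card + ∑ p ∈ W ×ˢ W, (F p).card :=
        (Finset.card_union_le _ _).trans (Nat.add_le_add_left Finset.card_biUnion_le _)
    _ ≤ W.card + (W ×ˢ W).card * b :=
        Nat.add_le_add_left (Finset.sum_le_card_nsmul _ _ _ fun p _ => hF p) _
    _ = W.card ^ 2 * b + W.card := by rw [Finset.card_product]; ring

theorem stmt15_general (A : V → V → Prop) (t : ℕ)
    (s : ℕ → ℕ) (hs : t ^ 2 * s (t - 1) + t ≤ s t)
    (hnocluster : ¬ ∃ S : Finset V, S.card ≤ s t ∧ ChromGE A ↑S t)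
    (Heavy : V → V → Prop)
    (hHeavy : ∀ u v, Heavy u v ↔ A u v ∧ ∃ S : Finset V, ↑S ⊆ ArcNbhd A u v ∧
      S.card ≤ s (t - 1) ∧ ChromGE A ↑S (t - 1) ∧ StronglyConnectedOn A ↑S) :
    ¬ ∃ W : Finset V, W.card = t ∧
      ∀ x ∈ W, ∀ y ∈ W, x ≠ y → Heavy x y ∨ Heavy y x := by
  classical
  rintro ⟨W, rfl, hclique⟩
  have hcluster (p : V × V) : ∃ S : Finset V, S.card ≤ s (W.card - 1) ∧
      (Heavy p.1 p.2 → ↑S ⊆ ArcNbhd A p.1 p.2 ∧ ChromGE A ↑S (W.card - 1)) := by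
    by_cases hp : Heavy p.1 p.2
    · obtain ⟨-, S, hS, hcard, hchrom, -⟩ := (hHeavy _ _).1 hp
      exact ⟨S, hcard, fun _ => ⟨hS, hchrom⟩⟩
    · exact ⟨∅, by simp, hp.elim⟩
  choose F hFcard hF using hcluster
  refine hnocluster ⟨W ∪ (W ×ˢ W).biUnion F,
    (card_union_biUnion_product_le W F hFcard).trans hs, ?_⟩
  refine chromGE_card_of_heavy_clique (k := W.card - 1) (by simp) (by omega) Heavy
    (fun u hu v hv huv => ?_) hclique
  refine ⟨((hHeavy u v).1 huv).1, ↑(F (u, v)), ?_, hF (u, v) huv⟩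
  intro w hw
  simp only [Finset.coe_union, Finset.coe_biUnion, Finset.mem_coe, Finset.mem_product]
  exact Or.inr (Set.mem_biUnion ⟨hu, hv⟩ hw)

theorem stmt15 (A : V → V → Prop) (hT : IsTournament A) (t : ℕ) (ht : 1 ≤ t)
    (s : ℕ → ℕ) (hs : t ^ 2 * s (t - 1) + t ≤ s t)
    (hnocluster : ¬ ∃ S : Finset V, S.card ≤ s t ∧ ChromGE A ↑S t)
    (Heavy : V → V → Prop)
    (hHeavy : ∀ u v, Heavy u v ↔ A u v ∧ ∃ S : Finset V, ↑S ⊆ ArcNbhd A u v ∧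
      S.card ≤ s (t - 1) ∧ ChromGE A ↑S (t - 1) ∧ StronglyConnectedOn A ↑S) :
    ¬ ∃ W : Finset V, W.card = t ∧
      ∀ x ∈ W, ∀ y ∈ W, x ≠ y → Heavy x y ∨ Heavy y x :=
  stmt15_general A t s hs hnocluster Heavy hHeavy
end

section
/- Let D be a strongly connected digraph with independence number α, and suppose that for every arc e of D, the induced subdigraph on N(e) = N^+(v) ∩ N^-(u) (where e = uv) has chromatic number at most t. Extend D to a tournament T by orienting each non-edge uv so that, whenever exactly one of N^+_A(v) ∩ N^-_A(u), N^+_A(u) ∩ N^-_A(v) is empty, the new arc is directed making the empty side the 'triangle side'. Then for every arc e of T (old or new), the D-chromatic number of the T-arc-neighborhood N_T(e) satisfies χ⃗(D[N_T(e)]) ≤ 3·F(t, α−1) + 2t, where F(t, α−1) is any bound on the chromatic number of digraphs with independence number α−1 all of whose arc neighborhoods have chromatic number ≤ t. -/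
variable {V : Type*}

/-- The subdigraph induced on `S` has independence number at most `n`. -/
def IndepLE (A : V → V → Prop) (S : Set V) (n : ℕ) : Prop :=
  ∀ I : Finset V, ↑I ⊆ S → (∀ x ∈ I, ∀ y ∈ I, ¬ A x y) → I.card ≤ n

/-!
Write `T = A ∪ B`. A vertex of `N_T(uv)` lies in `N_A(uv)`, or is a `B`-out-neighbour of `v`, or a
`B`-in-neighbour of `u`. The `B`-neighbours of a vertex `z` are non-adjacent to `z` in `D`, so an
independent set among them extends by `z`: they induce independence number at most `α - 1` and hence
need at most `F` colours. It remains to colour the `A`-part with `F + 2t` colours. For an old arc it is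
`N_A(uv)`, with `t` colours. For a new arc it is empty, unless some `w` satisfies `u → w → v`; then every
`x` with `v → x → u` lies in `N_A(uw)`, in `N_A(wv)` or is non-adjacent to `w`.

To apply the bound `F` to an induced subdigraph `D[S]`, we extend it to a digraph on all vertices in which
the vertices outside `S` form a transitive tournament dominating `S`; this creates neither independent sets
of size two meeting the outside nor nonempty arc neighbourhoods outside `S`.
-/

theorem AcyclicOn.anti {A A' : V → V → Prop} {S S' : Set V} (h : AcyclicOn A' S) (hS : S' ⊆ S)
    (hA : ∀ x ∈ S', ∀ y ∈ S', A x y → A' x y) : AcyclicOn A S' := fun v hv =>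
  h v (Relation.TransGen.mono (fun x y ⟨hx, hy, hxy⟩ => ⟨hS hx, hS hy, hA x hx y hy hxy⟩) v v hv)

theorem acyclicOn_empty (A : V → V → Prop) : AcyclicOn A ∅ := fun _ hv => by
  obtain ⟨_, _, h, _⟩ := Relation.TransGen.tail'_iff.mp hv
  exact h

theorem chromLE_empty (A : V → V → Prop) (k : ℕ) : ChromLE A ∅ k :=
  ⟨fun _ => ∅, fun _ hv => hv.elim, fun _ => (acyclicOn_empty A).anti Set.inter_subset_left
    fun _ _ _ _ => id⟩

namespace ChromLE

variable {A A' : V → V → Prop} {S S' : Set V} {k m : ℕ}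

theorem anti (h : ChromLE A' S k) (hS : S' ⊆ S) (hA : ∀ x ∈ S', ∀ y ∈ S', A x y → A' x y) :
    ChromLE A S' k := by
  obtain ⟨C, hcov, hac⟩ := h
  exact ⟨C, fun v hv => hcov v (hS hv), fun i =>
    (hac i).anti (Set.inter_subset_inter_right _ hS) fun x hx y hy => hA x hx.2 y hy.2⟩

theorem subset (h : ChromLE A S k) (hS : S' ⊆ S) : ChromLE A S' k :=
  h.anti hS fun _ _ _ _ => id

theorem union (h : ChromLE A S k) (h' : ChromLE A S' m) : ChromLE A (S ∪ S') (k + m) := by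
  obtain ⟨C, hcov, hac⟩ := h
  obtain ⟨C', hcov', hac'⟩ := h'
  refine ⟨Fin.append (fun i => C i ∩ S) (fun j => C' j ∩ S'), ?_, fun i => ?_⟩
  · rintro v (hv | hv)
    · obtain ⟨i, hi⟩ := hcov v hv
      exact ⟨Fin.castAdd m i, by rw [Fin.append_left]; exact ⟨hi, hv⟩⟩
    · obtain ⟨j, hj⟩ := hcov' v hv
      exact ⟨Fin.natAdd k j, by rw [Fin.append_right]; exact ⟨hj, hv⟩⟩
  · refine Fin.addCases (fun i => ?_) (fun j => ?_) i
    · rw [Fin.append_left]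
      exact (hac i).anti (fun x hx => ⟨hx.1.1, hx.1.2⟩) fun _ _ _ _ => id
    · rw [Fin.append_right]
      exact (hac' j).anti (fun x hx => ⟨hx.1.1, hx.1.2⟩) fun _ _ _ _ => id

theorem mono_s18 (h : ChromLE A S k) (hkm : k ≤ m) : ChromLE A S m := by
  obtain ⟨d, rfl⟩ := Nat.exists_eq_add_of_le hkm
  simpa using h.union (chromLE_empty A d)

end ChromLE

/-- The paper's `F(t, k)`, for digraphs on the vertex type `V`. -/
def IsChromBound (V : Type*) (k t F : ℕ) : Prop :=
  ∀ A : V → V → Prop, (∀ u v, A u v → ¬ A v u) → IndepLE A Set.univ k → ArcBounded A t →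
    ChromLE A Set.univ F

def padOutside [LinearOrder V] (A : V → V → Prop) (S : Set V) (x y : V) : Prop :=
  (x ∈ S ∧ y ∈ S ∧ A x y) ∨ (x ∉ S ∧ y ∈ S) ∨ (x ∉ S ∧ y ∉ S ∧ x < y)

section padOutside

variable [LinearOrder V] {A : V → V → Prop} {S : Set V} {x y : V}

theorem padOutside_of_mem (hx : x ∈ S) : padOutside A S x y ↔ y ∈ S ∧ A x y := by
  simp [padOutside, hx]

theorem padOutside_of_notMem (hx : x ∉ S) : padOutside A S x y ↔ y ∈ S ∨ x < y := by
  by_cases hy : y ∈ S <;> simp [padOutside, hx, hy]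

theorem padOutside_asymm (hA : ∀ u v, A u v → ¬ A v u) (h : padOutside A S x y) :
    ¬ padOutside A S y x := by
  rcases h with ⟨hx, hy, h⟩ | ⟨hx, hy⟩ | ⟨hx, hy, h⟩ <;>
    rintro (⟨hy', hx', h'⟩ | ⟨hy', hx'⟩ | ⟨hy', hx', h'⟩) <;>
    first
    | exact hA x y h h'
    | exact lt_asymm h h'
    | contradiction

theorem padOutside_indepLE {k : ℕ} (hS : IndepLE A S k) (hk : 1 ≤ k) :
    IndepLE (padOutside A S) Set.univ k := by
  intro I _ hI
  by_cases hIS : ↑I ⊆ S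
  · exact hS I hIS fun x hx y hy hxy => hI x hx y hy (Or.inl ⟨hIS hx, hIS hy, hxy⟩)
  obtain ⟨x, hxI, hxS⟩ := Set.not_subset.mp hIS
  have hI_eq : ∀ y ∈ I, y = x := by
    intro y hyI
    by_contra hne
    have hyS : y ∉ S := fun hyS => hI x hxI y hyI ((padOutside_of_notMem hxS).mpr (Or.inl hyS))
    rcases lt_or_gt_of_ne hne with h | h
    · exact hI y hyI x hxI ((padOutside_of_notMem hyS).mpr (Or.inr h))
    · exact hI x hxI y hyI ((padOutside_of_notMem hxS).mpr (Or.inr h))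
  exact (Finset.card_le_one_iff.mpr fun ha hb => (hI_eq _ ha).trans (hI_eq _ hb).symm).trans hk

theorem arcNbhd_padOutside_of_notMem (hx : x ∉ S) (hxy : padOutside A S x y) :
    ArcNbhd (padOutside A S) x y = ∅ := by
  refine Set.eq_empty_of_forall_notMem fun w ⟨hyw, hwx⟩ => ?_
  have hw : w ∉ S := fun hw => hx ((padOutside_of_mem hw).mp hwx).1
  have hy : y ∉ S := fun hy => hw ((padOutside_of_mem hy).mp hyw).1
  rw [padOutside_of_notMem hx] at hxy
  rw [padOutside_of_notMem hw] at hwx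
  rw [padOutside_of_notMem hy] at hyw
  simp only [hx, hy, hw, false_or] at hxy hwx hyw
  exact lt_asymm (hxy.trans hyw) hwx

theorem padOutside_arcBounded {t : ℕ} (hb : ArcBounded A t) :
    ArcBounded (padOutside A S) t := by
  intro x y hxy
  by_cases hx : x ∈ S
  · obtain ⟨hy, hAxy⟩ := (padOutside_of_mem hx).mp hxy
    have hsub : ArcNbhd (padOutside A S) x y ⊆ ArcNbhd A x y ∩ S := fun w ⟨hyw, hwx⟩ => by
      obtain ⟨hw, hyw⟩ := (padOutside_of_mem hy).mp hyw
      exact ⟨⟨hyw, ((padOutside_of_mem hw).mp hwx).2⟩, hw⟩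
    exact (hb x y hAxy).anti (fun w hw => (hsub hw).1) fun w hw _ _ hwz =>
      ((padOutside_of_mem (hsub hw).2).mp hwz).2
  · rw [arcNbhd_padOutside_of_notMem hx hxy]
    exact chromLE_empty _ t

end padOutside

theorem chromLE_of_indepLE {A : V → V → Prop} {S : Set V} {k t F : ℕ}
    (hA : ∀ u v, A u v → ¬ A v u) (hb : ArcBounded A t) (hF : IsChromBound V k t F)
    (hS : IndepLE A S k) : ChromLE A S F := by
  rcases Nat.eq_zero_or_pos k with rfl | hk
  · refine (chromLE_empty A F).subset fun v hv => ?_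
    have := hS {v} (by simpa using hv) (by simpa using fun h => hA v v h h)
    simp at this
  · let _ := IsWellOrder.linearOrder (WellOrderingRel : V → V → Prop)
    exact (hF _ (fun _ _ => padOutside_asymm hA) (padOutside_indepLE hS hk)
      (padOutside_arcBounded hb)).anti (Set.subset_univ S) fun x hx y hy hxy =>
        (padOutside_of_mem hx).mpr ⟨hy, hxy⟩

def nonNbhd (A : V → V → Prop) (z : V) : Set V := {w | w ≠ z ∧ ¬ A w z ∧ ¬ A z w}

theorem indepLE_nonNbhd {A : V → V → Prop} {α : ℕ} (hA : ∀ u v, A u v → ¬ A v u)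
    (hind : IndepLE A Set.univ α) (z : V) : IndepLE A (nonNbhd A z) (α - 1) := by
  classical
  intro I hI hIind
  have hz : z ∉ I := fun hz => (hI hz).1 rfl
  have hins : ∀ a ∈ insert z I, ∀ b ∈ insert z I, ¬ A a b := by
    simp only [Finset.forall_mem_insert]
    exact ⟨⟨fun h => hA z z h h, fun b hb => (hI hb).2.2⟩, fun a ha => ⟨(hI ha).2.1, hIind a ha⟩⟩
  have := hind _ (Set.subset_univ _) hins
  rw [Finset.card_insert_of_notMem hz] at this
  omega

theorem arcNbhd_or_subset (A B : V → V → Prop) (u v : V) :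
    ArcNbhd (fun x y => A x y ∨ B x y) u v ⊆ ArcNbhd A u v ∪ {w | B v w} ∪ {w | B w u} := by
  rintro w ⟨hvw | hvw, hwu | hwu⟩
  exacts [Or.inl (Or.inl ⟨hvw, hwu⟩), Or.inr hwu, Or.inl (Or.inr hvw), Or.inr hwu]

theorem arcNbhd_subset_of_mem_arcNbhd_swap {A : V → V → Prop} (hA : ∀ u v, A u v → ¬ A v u)
    {u v w : V} (hw : w ∈ ArcNbhd A v u) :
    ArcNbhd A u v ⊆ ArcNbhd A u w ∪ ArcNbhd A w v ∪ nonNbhd A w := by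
  rintro x ⟨hvx, hxu⟩
  by_cases hwx : A w x
  · exact Or.inl (Or.inl ⟨hwx, hxu⟩)
  by_cases hxw : A x w
  · exact Or.inl (Or.inr ⟨hvx, hxw⟩)
  exact Or.inr ⟨by rintro rfl; exact hA x v hw.2 hvx, hxw, hwx⟩

theorem stmt18_general (A B : V → V → Prop) (α t F : ℕ)
    (hA : ∀ u v, A u v → ¬ A v u)
    (hind : IndepLE A Set.univ α)
    (hb : ∀ u v, A u v → ChromLE A (ArcNbhd A u v) t)
    (hTour : IsTournament (fun u v => A u v ∨ B u v))
    (hBnew : ∀ u v, B u v → ¬ A u v ∧ ¬ A v u)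
    (horient : ∀ u v, B u v →
      (ArcNbhd A u v = ∅ ∨ ((ArcNbhd A u v).Nonempty ∧ (ArcNbhd A v u).Nonempty)))
    (hF : ∀ A' : V → V → Prop, (∀ u v, A' u v → ¬ A' v u) →
      IndepLE A' Set.univ (α - 1) →
      (∀ u v, A' u v → ChromLE A' (ArcNbhd A' u v) t) →
      ChromLE A' Set.univ F) :
    ∀ u v, (A u v ∨ B u v) →
      ChromLE A (ArcNbhd (fun x y => A x y ∨ B x y) u v) (3 * F + 2 * t)  := by
  intro u v huv
  have hN (z : V) : ChromLE A (nonNbhd A z) F :=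
    chromLE_of_indepLE hA hb hF (indepLE_nonNbhd hA hind z)
  have hB_irrefl (z : V) : ¬ B z z := fun h => hTour.1 z z (.inr h) (.inr h)
  have hBout (z : V) : ChromLE A {w | B z w} F := (hN z).subset fun w hzw =>
    ⟨fun h => hB_irrefl z (h ▸ hzw), (hBnew z w hzw).2, (hBnew z w hzw).1⟩
  have hBin (z : V) : ChromLE A {w | B w z} F := (hN z).subset fun w hwz =>
    ⟨fun h => hB_irrefl z (h ▸ hwz), (hBnew w z hwz).1, (hBnew w z hwz).2⟩
  have hAside : ChromLE A (ArcNbhd A u v) (F + 2 * t) := by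
    rcases huv with huv | huv
    · exact (hb u v huv).mono_s18 (by omega)
    rcases horient u v huv with h | ⟨-, w, hw⟩
    · exact h ▸ chromLE_empty A _
    exact ((((hb u w hw.1).union (hb w v hw.2)).union (hN w)).subset
      (arcNbhd_subset_of_mem_arcNbhd_swap hA hw)).mono_s18 (by omega)
  exact (((hAside.union (hBout v)).union (hBin u)).subset (arcNbhd_or_subset A B u v)).mono_s18
    (by omega)

theorem stmt18 (A B : V → V → Prop) (α t F : ℕ)
    (hA : ∀ u v, A u v → ¬ A v u)
    (hsc : StronglyConnected A)
    (hind : IndepLE A Set.univ α)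
    (hb : ∀ u v, A u v → ChromLE A (ArcNbhd A u v) t)
    (hTour : IsTournament (fun u v => A u v ∨ B u v))
    (hBnew : ∀ u v, B u v → ¬ A u v ∧ ¬ A v u)
    (horient : ∀ u v, B u v →
      (ArcNbhd A u v = ∅ ∨ ((ArcNbhd A u v).Nonempty ∧ (ArcNbhd A v u).Nonempty)))
    (hF : ∀ A' : V → V → Prop, (∀ u v, A' u v → ¬ A' v u) →
      IndepLE A' Set.univ (α - 1) →
      (∀ u v, A' u v → ChromLE A' (ArcNbhd A' u v) t) →
      ChromLE A' Set.univ F) :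
    ∀ u v, (A u v ∨ B u v) →
      ChromLE A (ArcNbhd (fun x y => A x y ∨ B x y) u v) (3 * F + 2 * t) :=
  stmt18_general A B α t F hA hind hb hTour hBnew horient hF
end
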